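/- Let ξ_n > 0 and η_n > 0 be sequences with ξ_n η_n → 0 and n^{1/2} η_n → ∞, let k_n be integers with 1 ≤ k_n < n such that n − k_n is eventually constant equal to m, and suppose θ_n ∈ ℝ and σ_n ∈ (0,∞) satisfy θ_n/(σ_n ξ_n η_n) → ζ in the extended real line. Then p̃_n(θ_n, σ_n) → ∫_{|ζ|}^∞ ρ_m(s) ds as n → ∞ (interpreted as 0 when |ζ| = ∞). -/

import Mathlib

/-!
With `a n = √n * η n` and `c n = θ n / (σ n * ξ n * η n)`, the integrand of `ptdel` is
`(Φ (a n * (s - c n)) - Φ (a n * (-s - c n))) * ρ_m s`. As `a n → ∞` and `c n → ζ`, the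
difference of the two `Φ` terms tends to `1` when `-s < ζ < s` and to `0` when `s < |ζ|`, so
for every `s ≠ |ζ|` the integrand converges to `𝟙 {|ζ| < s} * ρ_m s`. It is dominated by the
integrable `ρ_m`, and dominated convergence gives the limit `∫_{|ζ|}^∞ ρ_m`, which is `0` when
`|ζ| = ∞`.
-/

open MeasureTheory ProbabilityTheory Filter Set

/-- Standard normal cdf. -/
noncomputable def Phi (x : ℝ) : ℝ :=
  ∫ t in Iic x, (Real.sqrt (2 * Real.pi))⁻¹ * Real.exp (-t ^ 2 / 2)

/-- Standard normal pdf. -/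
noncomputable def stdPhi (t : ℝ) : ℝ :=
  (Real.sqrt (2 * Real.pi))⁻¹ * Real.exp (-t ^ 2 / 2)

/-- Extension of `Phi` to the extended reals, with `PhiE ⊤ = 1` and `PhiE ⊥ = 0`. -/
noncomputable def PhiE (z : EReal) : ℝ :=
  if z = ⊤ then 1 else if z = ⊥ then 0 else Phi z.toReal

/-- Density of `m^{-1/2}` times the square root of a chi-square with `m` degrees of freedom. -/
noncomputable def rho (m : ℕ) (s : ℝ) : ℝ :=
  if 0 < s then
    (2 : ℝ) ^ ((1 : ℝ) - (m : ℝ) / 2) * (Real.Gamma ((m : ℝ) / 2))⁻¹ * Real.sqrt m *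
      ((m : ℝ) * s ^ 2) ^ (((m : ℝ) - 1) / 2) * Real.exp (-(m : ℝ) * s ^ 2 / 2)
  else 0

/-- Unknown-variance variable deletion probability with `m` degrees of freedom. -/
noncomputable def ptdel (n m : ℕ) (ξ η θ σ : ℝ) : ℝ :=
  ∫ s in Ioi (0 : ℝ),
    (Phi (Real.sqrt n * (-θ / (σ * ξ) + s * η)) -
      Phi (Real.sqrt n * (-θ / (σ * ξ) - s * η))) * rho m s

open scoped Topology

lemma Phi_eq_cdf_gaussianReal : Phi = cdf (gaussianReal 0 1) := by
  ext x
  rw [cdf_eq_real, measureReal_def, gaussianReal_apply_eq_integral _ one_ne_zero,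
    ENNReal.toReal_ofReal (setIntegral_nonneg measurableSet_Iic
      fun t _ => gaussianPDFReal_nonneg 0 1 t)]
  simp [Phi, gaussianPDFReal]

lemma measurable_Phi : Measurable Phi :=
  Phi_eq_cdf_gaussianReal ▸ (monotone_cdf _).measurable

lemma tendsto_Phi_atTop : Tendsto Phi atTop (𝓝 1) :=
  Phi_eq_cdf_gaussianReal ▸ tendsto_cdf_atTop _

lemma tendsto_Phi_atBot : Tendsto Phi atBot (𝓝 0) :=
  Phi_eq_cdf_gaussianReal ▸ tendsto_cdf_atBot _

lemma abs_Phi_sub_Phi_le_one (x y : ℝ) : |Phi x - Phi y| ≤ 1 := by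
  rw [Phi_eq_cdf_gaussianReal, abs_sub_le_iff]
  constructor <;> linarith [cdf_nonneg (gaussianReal 0 1) x, cdf_le_one (gaussianReal 0 1) x,
    cdf_nonneg (gaussianReal 0 1) y, cdf_le_one (gaussianReal 0 1) y]

lemma integrableOn_rho (m : ℕ) : IntegrableOn (rho m) (Ioi 0) := by
  rcases Nat.eq_zero_or_pos m with rfl | hm
  · have hrho : rho 0 = 0 := funext fun s => by simp [rho]
    exact hrho ▸ integrableOn_zero
  have hm' : (0 : ℝ) < m := by exact_mod_cast hm
  refine ((integrable_rpow_mul_exp_neg_mul_sq (half_pos hm') (s := m - 1) (by linarith)).const_mul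
    ((2 : ℝ) ^ ((1 : ℝ) - m / 2) * (Real.Gamma (m / 2))⁻¹ * Real.sqrt m *
      (m : ℝ) ^ (((m : ℝ) - 1) / 2))).integrableOn.congr_fun (fun s (hs : 0 < s) => ?_)
    measurableSet_Ioi
  have hpow : ((m : ℝ) * s ^ 2) ^ (((m : ℝ) - 1) / 2) =
      (m : ℝ) ^ (((m : ℝ) - 1) / 2) * s ^ ((m : ℝ) - 1) := by
    rw [Real.mul_rpow hm'.le (by positivity), ← Real.rpow_natCast s 2, ← Real.rpow_mul hs.le]
    congr 2; push_cast; ring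
  rw [rho, if_pos hs, hpow]
  ring_nf

lemma EReal.ae_coe_ne (ζ : EReal) : ∀ᵐ s : ℝ, (s : EReal) ≠ ζ := by
  refine measure_mono_null (fun s (hs : ¬(s : EReal) ≠ ζ) => ?_) (measure_singleton ζ.toReal)
  rw [not_ne_iff] at hs
  rw [mem_singleton_iff, ← hs, EReal.toReal_coe]

section Limits

variable {ι : Type*} {l : Filter ι} {a c : ι → ℝ} {ζ : EReal} {x : ℝ}

lemma tendsto_mul_sub_atTop (ha : Tendsto a l atTop)
    (hc : Tendsto (fun i => (c i : EReal)) l (𝓝 ζ)) (hx : ζ < x) :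
    Tendsto (fun i => a i * (x - c i)) l atTop := by
  obtain ⟨t, hζt, htx⟩ := EReal.lt_iff_exists_real_btwn.mp hx
  have hct : ∀ᶠ i in l, c i < t :=
    (hc.eventually (gt_mem_nhds hζt)).mono fun i h => EReal.coe_lt_coe_iff.mp h
  refine tendsto_atTop_mono' l ?_
    (ha.atTop_mul_const (sub_pos.mpr (EReal.coe_lt_coe_iff.mp htx)))
  filter_upwards [hct, ha.eventually_ge_atTop 0] with i hi hai
  exact mul_le_mul_of_nonneg_left (by linarith) hai

lemma tendsto_mul_sub_atBot (ha : Tendsto a l atTop)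
    (hc : Tendsto (fun i => (c i : EReal)) l (𝓝 ζ)) (hx : x < ζ) :
    Tendsto (fun i => a i * (x - c i)) l atBot := by
  obtain ⟨t, hxt, htζ⟩ := EReal.lt_iff_exists_real_btwn.mp hx
  have hct : ∀ᶠ i in l, t < c i :=
    (hc.eventually (lt_mem_nhds htζ)).mono fun i h => EReal.coe_lt_coe_iff.mp h
  refine tendsto_atBot_mono' l ?_
    (ha.atTop_mul_const_of_neg (sub_neg.mpr (EReal.coe_lt_coe_iff.mp hxt)))
  filter_upwards [hct, ha.eventually_ge_atTop 0] with i hi hai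
  exact mul_le_mul_of_nonneg_left (by linarith) hai

lemma tendsto_Phi_sub_Phi (ha : Tendsto a l atTop)
    (hc : Tendsto (fun i => (c i : EReal)) l (𝓝 ζ)) {s : ℝ} (hs : 0 < s)
    (h₁ : ζ ≠ s) (h₂ : ζ ≠ (-s : ℝ)) :
    Tendsto (fun i => Phi (a i * (s - c i)) - Phi (a i * (-s - c i))) l
      (𝓝 (if ζ ∈ Ioo ((-s : ℝ) : EReal) s then 1 else 0)) := by
  have hs' : ((-s : ℝ) : EReal) < s := EReal.coe_lt_coe_iff.mpr (by linarith)
  have lim_one {x : ℝ} (hx : ζ < x) : Tendsto (fun i => Phi (a i * (x - c i))) l (𝓝 1) :=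
    tendsto_Phi_atTop.comp (tendsto_mul_sub_atTop ha hc hx)
  have lim_zero {x : ℝ} (hx : x < ζ) : Tendsto (fun i => Phi (a i * (x - c i))) l (𝓝 0) :=
    tendsto_Phi_atBot.comp (tendsto_mul_sub_atBot ha hc hx)
  rcases h₂.lt_or_gt with hlo | hlo
  · rw [if_neg fun h => h.1.not_gt hlo]
    simpa using (lim_one (hlo.trans hs')).sub (lim_one hlo)
  rcases h₁.lt_or_gt with hhi | hhi
  · rw [if_pos ⟨hlo, hhi⟩]
    simpa using (lim_one hhi).sub (lim_zero hlo)
  · rw [if_neg fun h => h.2.not_gt hhi]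
    simpa using (lim_zero hhi).sub (lim_zero hlo)

lemma tendsto_setIntegral_Phi_sub_Phi_mul [l.IsCountablyGenerated] (ha : Tendsto a l atTop)
    (hc : Tendsto (fun i => (c i : EReal)) l (𝓝 ζ)) {f : ℝ → ℝ} (hf : IntegrableOn f (Ioi 0)) :
    Tendsto (fun i => ∫ s in Ioi 0, (Phi (a i * (s - c i)) - Phi (a i * (-s - c i))) * f s) l
      (𝓝 (∫ s in Ioi 0, {s : ℝ | ζ ∈ Ioo ((-s : ℝ) : EReal) s}.indicator f s)) := by
  refine tendsto_integral_filter_of_dominated_convergence (fun s => ‖f s‖) ?_ ?_ hf.norm ?_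
  · refine Eventually.of_forall fun i => AEStronglyMeasurable.mul ?_ hf.aestronglyMeasurable
    exact (measurable_Phi.comp (by fun_prop)).sub (measurable_Phi.comp (by fun_prop))
      |>.aestronglyMeasurable
  · refine Eventually.of_forall fun i => ae_of_all _ fun s => ?_
    rw [norm_mul]
    exact mul_le_of_le_one_left (norm_nonneg _) (abs_Phi_sub_Phi_le_one _ _)
  · have hneg : ∀ᵐ s : ℝ, ((-s : ℝ) : EReal) ≠ ζ :=
      (Measure.measurePreserving_neg volume).quasiMeasurePreserving.ae (EReal.ae_coe_ne ζ)
    filter_upwards [ae_restrict_mem measurableSet_Ioi, ae_restrict_of_ae (EReal.ae_coe_ne ζ),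
      ae_restrict_of_ae hneg] with s (hs : 0 < s) h₁ h₂
    simpa only [indicator_apply, mem_ofPred_eq, ite_mul, one_mul, zero_mul] using
      (tendsto_Phi_sub_Phi ha hc hs h₁.symm h₂.symm).mul_const (f s)

end Limits

lemma ptdel_eq_integral_Phi_mul_sub (n m : ℕ) (ξ θ σ : ℝ) {η : ℝ} (hη : η ≠ 0) :
    ptdel n m ξ η θ σ = ∫ s in Ioi 0, (Phi (√n * η * (s - θ / (σ * ξ * η))) -
      Phi (√n * η * (-s - θ / (σ * ξ * η)))) * rho m s := by
  have hθ : θ / (σ * ξ * η) * η = θ / (σ * ξ) := by rw [← div_div, div_mul_cancel₀ _ hη]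
  have key (x : ℝ) : √n * (-θ / (σ * ξ) + x * η) = √n * η * (x - θ / (σ * ξ * η)) := by
    linear_combination √n * hθ
  simp only [ptdel, sub_eq_add_neg (-θ / (σ * ξ)), ← neg_mul, key]

lemma setOf_coe_mem_Ioo_neg (x : ℝ) :
    {s : ℝ | (x : EReal) ∈ Ioo ((-s : ℝ) : EReal) s} = Ioi |x| := by
  ext s
  simp only [mem_ofPred_eq, mem_Ioo, EReal.coe_lt_coe_iff, mem_Ioi, abs_lt]

theorem stmt_5_general (ξ η : ℕ → ℝ) (hη : ∀ n, 0 < η n)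
    (hne : Tendsto (fun n : ℕ => Real.sqrt n * η n) atTop atTop)
    (k : ℕ → ℕ)
    (m : ℕ) (hm : ∀ᶠ n in atTop, n - k n = m)
    (θ σ : ℕ → ℝ)
    (ζ : EReal)
    (hζ : Tendsto (fun n : ℕ => ((θ n / (σ n * ξ n * η n) : ℝ) : EReal)) atTop (nhds ζ)) :
    (∀ ζr : ℝ, ζ = (ζr : EReal) →
        Tendsto (fun n : ℕ => ptdel n (n - k n) (ξ n) (η n) (θ n) (σ n)) atTop
          (nhds (∫ s in Ioi |ζr|, rho m s))) ∧
    ((ζ = ⊤ ∨ ζ = ⊥) →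
        Tendsto (fun n : ℕ => ptdel n (n - k n) (ξ n) (η n) (θ n) (σ n)) atTop (nhds 0)) := by
  have hptdel : (fun n : ℕ => ∫ s in Ioi 0, (Phi (√n * η n * (s - θ n / (σ n * ξ n * η n))) -
      Phi (√n * η n * (-s - θ n / (σ n * ξ n * η n)))) * rho m s) =ᶠ[atTop]
      fun n : ℕ => ptdel n (n - k n) (ξ n) (η n) (θ n) (σ n) := by
    filter_upwards [hm] with n hn
    rw [hn, ptdel_eq_integral_Phi_mul_sub _ _ _ _ _ (hη n).ne']
  have hlim := (tendsto_setIntegral_Phi_sub_Phi_mul hne hζ (integrableOn_rho m)).congr' hptdel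
  refine ⟨?_, ?_⟩
  · rintro ζr rfl
    rwa [setOf_coe_mem_Ioo_neg, setIntegral_indicator measurableSet_Ioi, Ioi_inter_Ioi,
      sup_of_le_right (abs_nonneg ζr)] at hlim
  · rintro (rfl | rfl) <;> simpa using hlim

/-- consistent tuning, unknown-variance limit of the deletion probability when
`n - k_n` is eventually constant equal to `m`. -/
theorem stmt_5 (ξ η : ℕ → ℝ) (hξ : ∀ n, 0 < ξ n) (hη : ∀ n, 0 < η n)
    (hxe : Tendsto (fun n : ℕ => ξ n * η n) atTop (nhds 0))
    (hne : Tendsto (fun n : ℕ => Real.sqrt n * η n) atTop atTop)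
    (k : ℕ → ℕ) (hk : ∀ n, 2 ≤ n → 1 ≤ k n ∧ k n < n)
    (m : ℕ) (hm : ∀ᶠ n in atTop, n - k n = m)
    (θ σ : ℕ → ℝ) (hσ : ∀ n, 0 < σ n)
    (ζ : EReal)
    (hζ : Tendsto (fun n : ℕ => ((θ n / (σ n * ξ n * η n) : ℝ) : EReal)) atTop (nhds ζ)) :
    (∀ ζr : ℝ, ζ = (ζr : EReal) →
        Tendsto (fun n : ℕ => ptdel n (n - k n) (ξ n) (η n) (θ n) (σ n)) atTop
          (nhds (∫ s in Ioi |ζr|, rho m s))) ∧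
    ((ζ = ⊤ ∨ ζ = ⊥) →
        Tendsto (fun n : ℕ => ptdel n (n - k n) (ξ n) (η n) (θ n) (σ n)) atTop (nhds 0)) :=
  stmt_5_general ξ η hη hne k m hm θ σ ζ hζ
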